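/- arXiv:1602.03963 — 2 statements merged into one kernel-verified Lean document; each statement's English description precedes it below -/
import Mathlib

section
/- Assume the interaction graph G = (V, I) is acyclic, and let T be a maximum-weight spanning tree of the complete graph on V with respect to the weight assignment w. Then for any two distinct i, j ∈ V, we have {i,j} ∈ I if and only if {i,j} ∈ T and w_{{i,j}} > 0. -/
open Finset

/-- The sigmoid function `σ(t) = eᵗ/(1+eᵗ)`. -/
noncomputable def sigmoid (t : ℝ) : ℝ := Real.exp t / (1 + Real.exp t)

/-- Interpretation of a Boolean as `±1 ∈ ℝ`. -/
def pm (b : Bool) : ℝ := if b then 1 else -1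

/-- `Σ_{{i,j}∈E} β_{{i,j}} x_i x_j`, summed over unordered pairs of distinct indices. -/
noncomputable def fld (d : ℕ) (β : Fin d → Fin d → ℝ) (x : Fin d → Bool) : ℝ :=
  ∑ i : Fin d, ∑ j ∈ Finset.Ioi i, β i j * pm (x i) * pm (x j)

/-- `Pr(y = s·(+1) | x_V ∈ A)`.  Since the covariates are i.i.d. uniform on `{−1,+1}`
and `Pr(y = s | x_V = x) = σ(s · Σ β x_i x_j)`, this conditional probability equals
`(Σ_{x∈A} σ(s · fld x)) / |A|`. -/
noncomputable def condProbY (d : ℕ) (β : Fin d → Fin d → ℝ) (s : ℝ)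
    (A : Finset (Fin d → Bool)) : ℝ :=
  (∑ x ∈ A, sigmoid (s * fld d β x)) / A.card

open scoped Classical in
/-- The influence `w_e = |2·Pr(y = +1 | x_i = +1, x_j = +1) − 1|` for `e = {i,j}`. -/
noncomputable def wgt (d : ℕ) (β : Fin d → Fin d → ℝ) (e : Sym2 (Fin d)) : ℝ :=
  |2 * condProbY d β 1 (Finset.univ.filter (fun x => ∀ v ∈ e, x v = true)) - 1|

/-- The interaction graph `G = (V, I)` with `I = {{i,j} : β_{{i,j}} ≠ 0}`. -/
def interGraph (d : ℕ) (β : Fin d → Fin d → ℝ) : SimpleGraph (Fin d) :=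
  SimpleGraph.fromRel (fun i j => β i j ≠ 0)

/-- `T` is a spanning tree of the complete graph on `V`: a set of `|V| − 1` non-loop edges
forming a connected acyclic graph on `V`. -/
def IsSpanningTree {V : Type*} [Fintype V] (T : Finset (Sym2 V)) : Prop :=
  T.card = Fintype.card V - 1 ∧ (∀ e ∈ T, ¬ e.IsDiag) ∧
    (SimpleGraph.fromEdgeSet (T : Set (Sym2 V))).Connected ∧
    (SimpleGraph.fromEdgeSet (T : Set (Sym2 V))).IsAcyclic

/-- `T` is a maximum-weight spanning tree of the complete graph on `V` with respect to the
weight assignment `u`. -/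
def IsMaxSpanningTree {V : Type*} [Fintype V] (u : Sym2 V → ℝ) (T : Finset (Sym2 V)) : Prop :=
  IsSpanningTree T ∧ ∀ T' : Finset (Sym2 V), IsSpanningTree T' → ∑ e ∈ T', u e ≤ ∑ e ∈ T, u e

/-!
Write `φ(t) = 2σ(t) − 1` (the mean of `y` given the field `t`), `χ_S(x) = ∏_{v ∈ S} x_v` and `f`
for the field `Σ β_{ij} x_i x_j`. Flipping the spins on a vertex set `g` is a bijection of the cube
that negates exactly the couplings across `g`. Flipping all spins kills `E[φ(f) χ_p]`, and flipping
one side of a 2-colouring of the forest `G` negates `f`, so `E[φ(f)] = 0`; expanding the indicator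
of `x_p = x_q = 1` as `(1 + x_p)(1 + x_q)/4` then gives `w_{pq} = |E[φ(f) χ_{pq}]|`.

For an edge `ab` of `G`, let `g` be the side of `a` in `G − ab`. Flipping `g` turns `f` into
`f − 2β_{ab} χ_{ab}` and negates `χ_{pq}` for every pair `pq` across `g`, so
`2 E[φ(f) χ_{pq}] = E[D χ_{pq}]` with `D = φ(f) − φ(f − 2β_{ab} χ_{ab})`. Since `φ` is increasing,
`β_{ab} D χ_{ab} > 0`, and `χ_{ab} χ_{pq}` takes the value `−1` when `pq ≠ ab`; hence `w_{ab} > 0`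
and `w_{pq} < w_{ab}` for every other pair `pq` across `g`. By the cut property of maximum spanning
trees, `ab ∈ T`.

Conversely, if `ij ∈ T` and `w_{ij} > 0`, then `i` and `j` are connected in `G` (flipping the
component of `i` shows that the correlation vanishes otherwise). A `G`-path from `i` to `j` lies in
`T`, and since `T` is acyclic the `T`-edge `ij` must be that path, so `ij` is an edge of `G`.
-/

lemma sigmoid_eq_real_sigmoid (t : ℝ) : sigmoid t = Real.sigmoid t := by
  rw [sigmoid, Real.sigmoid_def, Real.exp_neg]
  field_simp
  ring

noncomputable def centeredSigmoid (t : ℝ) : ℝ := 2 * sigmoid t - 1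

lemma centeredSigmoid_odd : Function.Odd centeredSigmoid := fun t => by
  simp only [centeredSigmoid, sigmoid_eq_real_sigmoid, Real.sigmoid_neg]
  ring

lemma centeredSigmoid_strictMono : StrictMono centeredSigmoid := fun s t hst => by
  simpa [centeredSigmoid, sigmoid_eq_real_sigmoid] using Real.sigmoid_strictMono hst

lemma StrictMono.mul_sub_sub_pos {φ : ℝ → ℝ} (hφ : StrictMono φ) {r : ℝ} (hr : r ≠ 0) (u : ℝ) :
    0 < r * (φ u - φ (u - r)) := by
  rcases hr.lt_or_gt with hr | hr
  · exact mul_pos_of_neg_of_neg hr (sub_neg.mpr (hφ (by linarith)))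
  · exact mul_pos hr (sub_pos.mpr (hφ (by linarith)))

lemma abs_sum_mul_lt_sum {ι : Type*} [Fintype ι] {F s : ι → ℝ} (hF : ∀ i, 0 < F i)
    (hs : ∀ i, |s i| ≤ 1) {i₀ i₁ : ι} (h₀ : s i₀ < 1) (h₁ : -1 < s i₁) :
    |∑ i, F i * s i| < ∑ i, F i := by
  have hle : ∀ i, F i * s i ≤ F i := fun i => by
    nlinarith [hF i, (abs_le.mp (hs i)).2]
  have hge : ∀ i, -F i ≤ F i * s i := fun i => by
    nlinarith [hF i, (abs_le.mp (hs i)).1]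
  refine abs_lt.mpr ⟨?_, ?_⟩
  · rw [← Finset.sum_neg_distrib]
    exact Finset.sum_lt_sum (fun i _ => hge i) ⟨i₁, Finset.mem_univ _, by nlinarith [hF i₁]⟩
  · exact Finset.sum_lt_sum (fun i _ => hle i) ⟨i₀, Finset.mem_univ _, by nlinarith [hF i₀]⟩

@[simp] lemma pm_true : pm true = 1 := rfl
@[simp] lemma pm_false : pm false = -1 := rfl
@[simp] lemma pm_mul_self (b : Bool) : pm b * pm b = 1 := by cases b <;> norm_num [pm]
@[simp] lemma abs_pm (b : Bool) : |pm b| = 1 := by cases b <;> norm_num [pm]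
@[simp] lemma pm_mul_pm_mul_self (a b : Bool) : pm a * pm b * (pm a * pm b) = 1 := by
  cases a <;> cases b <;> norm_num [pm]

section Gauge

variable {ι : Type*}

def flipOn (g x : ι → Bool) : ι → Bool := fun v => xor (g v) (x v)

lemma flipOn_involutive (g : ι → Bool) : Function.Involutive (flipOn g) := fun x => by
  funext v
  simp [flipOn]

lemma pm_flipOn (g x : ι → Bool) (v : ι) :
    pm (flipOn g x v) = (if g v then -1 else 1) * pm (x v) := by
  cases hg : g v <;> cases hx : x v <;> simp [flipOn, hg, hx]

variable [Fintype ι] [DecidableEq ι]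

lemma sum_flipOn (g : ι → Bool) (F : (ι → Bool) → ℝ) :
    ∑ x, F (flipOn g x) = ∑ x, F x :=
  Equiv.sum_comp (flipOn_involutive g).toPerm F

lemma sum_eq_zero_of_flipOn (g : ι → Bool) {F : (ι → Bool) → ℝ}
    (hF : ∀ x, F (flipOn g x) = -F x) : ∑ x, F x = 0 := by
  have h := sum_flipOn g F
  simp only [hF, Finset.sum_neg_distrib] at h
  linarith

lemma sum_pm (p : ι) : ∑ x : ι → Bool, pm (x p) = 0 :=
  sum_eq_zero_of_flipOn (fun v => v = p) fun x => by simp [pm_flipOn]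

lemma sum_pm_mul_pm {p q : ι} (hpq : p ≠ q) : ∑ x : ι → Bool, pm (x p) * pm (x q) = 0 :=
  sum_eq_zero_of_flipOn (fun v => v = p) fun x => by simp [pm_flipOn, hpq.symm]

end Gauge

def IsOnlyCrossingEdge {V : Type*} (G : SimpleGraph V) (g : V → Bool) (a b : V) : Prop :=
  g a ≠ g b ∧ ∀ u v, G.Adj u v → g u ≠ g v → s(u, v) = s(a, b)

lemma IsOnlyCrossingEdge.symm {V : Type*} {G : SimpleGraph V} {g : V → Bool} {a b : V}
    (h : IsOnlyCrossingEdge G g a b) : IsOnlyCrossingEdge G g b a :=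
  ⟨h.1.symm, fun u v huv hg => (h.2 u v huv hg).trans Sym2.eq_swap⟩

section Field

variable {d : ℕ} {β : Fin d → Fin d → ℝ}

lemma interGraph_adj_of_ne_zero {i j : Fin d} (hij : i ≠ j) (h : β i j ≠ 0) :
    (interGraph d β).Adj i j :=
  SimpleGraph.fromRel_adj _ _ _ |>.mpr ⟨hij, Or.inl h⟩

lemma interGraph_adj_iff (hsymm : ∀ i j, β i j = β j i) {i j : Fin d} :
    (interGraph d β).Adj i j ↔ i ≠ j ∧ β i j ≠ 0 := by
  rw [interGraph, SimpleGraph.fromRel_adj, hsymm j i, or_self]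

lemma fld_congr {γ : Fin d → Fin d → ℝ} (h : ∀ i j, i < j → β i j = γ i j) (x : Fin d → Bool) :
    fld d β x = fld d γ x :=
  Finset.sum_congr rfl fun i _ => Finset.sum_congr rfl fun j hj => by
    rw [h i j (Finset.mem_Ioi.mp hj)]

def crossCoupling (g : Fin d → Bool) (β : Fin d → Fin d → ℝ) : Fin d → Fin d → ℝ :=
  fun i j => if g i = g j then 0 else β i j

lemma fld_flipOn (g x : Fin d → Bool) :
    fld d β (flipOn g x) = fld d β x - 2 * fld d (crossCoupling g β) x := by
  simp only [fld, Finset.mul_sum, ← Finset.sum_sub_distrib]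
  refine Finset.sum_congr rfl fun i _ => Finset.sum_congr rfl fun j _ => ?_
  rw [pm_flipOn, pm_flipOn, crossCoupling]
  cases g i <;> cases g j <;> simp <;> ring

lemma fld_flipOn_of_forall_adj_eq {g : Fin d → Bool}
    (h : ∀ u v, (interGraph d β).Adj u v → g u = g v) (x : Fin d → Bool) :
    fld d β (flipOn g x) = fld d β x := by
  have hzero : crossCoupling g β = 0 := by
    funext u v
    by_cases hg : g u = g v
    · simp [crossCoupling, hg]
    · have hβ : β u v = 0 := by
        by_contra hb
        exact hg (h u v (interGraph_adj_of_ne_zero (by rintro rfl; exact hg rfl) hb))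
      simp [crossCoupling, hg, hβ]
  rw [fld_flipOn, hzero]
  simp [fld]

lemma fld_flipOn_of_forall_adj_ne {g : Fin d → Bool}
    (h : ∀ u v, (interGraph d β).Adj u v → g u ≠ g v) (x : Fin d → Bool) :
    fld d β (flipOn g x) = -fld d β x := by
  have hcross : fld d (crossCoupling g β) x = fld d β x := by
    refine fld_congr (fun i j hij => ?_) x
    by_cases hg : g i = g j
    · have hβ : β i j = 0 := by
        by_contra hb
        exact h i j (interGraph_adj_of_ne_zero hij.ne hb) hg
      simp [crossCoupling, hg, hβ]
    · simp [crossCoupling, hg]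
  rw [fld_flipOn, hcross]
  ring

lemma crossCoupling_eq_zero_of_isOnlyCrossingEdge {g : Fin d → Bool} {a b : Fin d}
    (h : IsOnlyCrossingEdge (interGraph d β) g a b) {i j : Fin d} (hij : s(i, j) ≠ s(a, b)) :
    crossCoupling g β i j = 0 := by
  by_cases hg : g i = g j
  · simp [crossCoupling, hg]
  · have hβ : β i j = 0 := by
      by_contra hb
      exact hij (h.2 i j (interGraph_adj_of_ne_zero (by rintro rfl; exact hg rfl) hb) hg)
    simp [crossCoupling, hg, hβ]

lemma fld_crossCoupling_of_isOnlyCrossingEdge (hsymm : ∀ i j, β i j = β j i)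
    {g : Fin d → Bool} {a b : Fin d} (h : IsOnlyCrossingEdge (interGraph d β) g a b)
    (x : Fin d → Bool) :
    fld d (crossCoupling g β) x = β a b * (pm (x a) * pm (x b)) := by
  have hab : a ≠ b := by rintro rfl; exact h.1 rfl
  wlog hlt : a < b generalizing a b
  · rw [this h.symm hab.symm (hab.symm.lt_of_le (not_lt.mp hlt)), hsymm]
    ring
  rw [fld, Finset.sum_eq_single a, Finset.sum_eq_single b]
  · simp [crossCoupling, h.1, mul_assoc]
  · intro j _ hjb
    rw [crossCoupling_eq_zero_of_isOnlyCrossingEdge h (by simp [hjb, hab]), zero_mul, zero_mul]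
  · simp [hlt]
  · intro i _ hia
    refine Finset.sum_eq_zero fun j hj => ?_
    have hij : s(i, j) ≠ s(a, b) := by
      have := Finset.mem_Ioi.mp hj
      rintro h'
      rcases Sym2.eq_iff.mp h' with ⟨rfl, -⟩ | ⟨rfl, rfl⟩
      · exact hia rfl
      · exact absurd (this.trans hlt) (lt_irrefl _)
    rw [crossCoupling_eq_zero_of_isOnlyCrossingEdge h hij, zero_mul, zero_mul]
  · simp

lemma fld_flipOn_of_isOnlyCrossingEdge (hsymm : ∀ i j, β i j = β j i)
    {g : Fin d → Bool} {a b : Fin d} (h : IsOnlyCrossingEdge (interGraph d β) g a b)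
    (x : Fin d → Bool) :
    fld d β (flipOn g x) = fld d β x - 2 * β a b * (pm (x a) * pm (x b)) := by
  rw [fld_flipOn, fld_crossCoupling_of_isOnlyCrossingEdge hsymm h, mul_assoc]

end Field

section Correlation

variable {d : ℕ} {φ : ℝ → ℝ} {β : Fin d → Fin d → ℝ}

variable (φ β) in
noncomputable def corr (p q : Fin d) : ℝ :=
  ∑ x : Fin d → Bool, φ (fld d β x) * (pm (x p) * pm (x q))

variable (φ β) in
lemma sum_comp_fld_mul_pm (p : Fin d) : ∑ x : Fin d → Bool, φ (fld d β x) * pm (x p) = 0 :=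
  sum_eq_zero_of_flipOn (fun _ => true) fun x => by
    rw [fld_flipOn_of_forall_adj_eq (fun _ _ _ => rfl), pm_flipOn]
    simp

lemma sum_comp_fld_eq_zero (hφ : Function.Odd φ) (hcol : (interGraph d β).Colorable 2) :
    ∑ x : Fin d → Bool, φ (fld d β x) = 0 := by
  obtain ⟨C⟩ := hcol
  refine sum_eq_zero_of_flipOn (fun v => finTwoEquiv (C v)) fun x => ?_
  rw [fld_flipOn_of_forall_adj_ne (fun u v huv => finTwoEquiv.injective.ne (C.valid huv)), hφ]

lemma corr_eq_zero_of_not_reachable {p q : Fin d} (h : ¬ (interGraph d β).Reachable p q) :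
    corr φ β p q = 0 := by
  classical
  let g : Fin d → Bool := fun v => decide ((interGraph d β).Reachable p v)
  have hg : ∀ u v, (interGraph d β).Adj u v → g u = g v := fun u v huv => by
    simp only [g, decide_eq_decide]
    exact ⟨fun hu => hu.trans huv.reachable, fun hv => hv.trans huv.symm.reachable⟩
  refine sum_eq_zero_of_flipOn g fun x => ?_
  rw [fld_flipOn_of_forall_adj_eq hg, pm_flipOn, pm_flipOn]
  simp [g, h]

lemma corr_eq_neg_sum_flipOn {g : Fin d → Bool} {p q : Fin d} (hg : g p ≠ g q) :
    corr φ β p q = -∑ x : Fin d → Bool, φ (fld d β (flipOn g x)) * (pm (x p) * pm (x q)) := by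
  conv_lhs => rw [corr, ← sum_flipOn g]
  rw [← Finset.sum_neg_distrib]
  refine Finset.sum_congr rfl fun x _ => ?_
  rw [pm_flipOn, pm_flipOn]
  cases hp : g p <;> cases hq : g q <;> simp_all

lemma exists_pos_sum_eq_mul_corr (hφ : StrictMono φ) (hsymm : ∀ i j, β i j = β j i)
    {g : Fin d → Bool} {a b : Fin d} (hcut : IsOnlyCrossingEdge (interGraph d β) g a b)
    (hβ : β a b ≠ 0) :
    ∃ F : (Fin d → Bool) → ℝ, (∀ x, 0 < F x) ∧ ∀ p q, g p ≠ g q →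
      2 * β a b * corr φ β p q = ∑ x, F x * (pm (x a) * pm (x b) * (pm (x p) * pm (x q))) := by
  set χ : (Fin d → Bool) → ℝ := fun x => pm (x a) * pm (x b)
  set D : (Fin d → Bool) → ℝ := fun x => φ (fld d β x) - φ (fld d β x - 2 * β a b * χ x)
  refine ⟨fun x => β a b * χ x * D x, fun x => ?_, fun p q hg => ?_⟩
  · have hχx : χ x ≠ 0 := by simp [χ, ← abs_pos]
    have := hφ.mul_sub_sub_pos (mul_ne_zero (mul_ne_zero two_ne_zero hβ) hχx) (fld d β x)
    simp only [D]
    linarith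
  · have h2 : 2 * corr φ β p q = ∑ x, D x * (pm (x p) * pm (x q)) := by
      rw [two_mul]
      nth_rewrite 2 [corr_eq_neg_sum_flipOn hg]
      simp only [corr, fld_flipOn_of_isOnlyCrossingEdge hsymm hcut, D, χ, ← sub_eq_add_neg,
        ← Finset.sum_sub_distrib, sub_mul]
    rw [mul_right_comm, h2, Finset.sum_mul]
    refine Finset.sum_congr rfl fun x _ => ?_
    have hχ2 : χ x * χ x = 1 := pm_mul_pm_mul_self _ _
    linear_combination (-(β a b * D x * (pm (x p) * pm (x q)))) * hχ2

lemma exists_pm_mul_eq_neg_one {p q a b : Fin d} (hpq : p ≠ q) (hne : s(p, q) ≠ s(a, b)) :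
    ∃ x : Fin d → Bool, pm (x a) * pm (x b) * (pm (x p) * pm (x q)) = -1 := by
  obtain ⟨r, hr, hra, hrb⟩ : ∃ r, (r = p ∨ r = q) ∧ r ≠ a ∧ r ≠ b := by
    by_cases hp : p = a ∨ p = b
    · refine ⟨q, .inr rfl, ?_, ?_⟩ <;> rintro rfl <;> rcases hp with rfl | rfl <;>
        simp_all [Sym2.eq_swap]
    · exact ⟨p, .inl rfl, not_or.mp hp⟩
  refine ⟨fun v => v ≠ r, ?_⟩
  rcases hr with rfl | rfl <;> simp [pm, hra.symm, hrb.symm, hpq, hpq.symm]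

lemma abs_corr_pos_and_lt_of_isOnlyCrossingEdge (hφ : StrictMono φ) (hsymm : ∀ i j, β i j = β j i)
    {g : Fin d → Bool} {a b : Fin d} (hcut : IsOnlyCrossingEdge (interGraph d β) g a b)
    (hβ : β a b ≠ 0) :
    0 < |corr φ β a b| ∧ ∀ p q, p ≠ q → g p ≠ g q → s(p, q) ≠ s(a, b) →
      |corr φ β p q| < |corr φ β a b| := by
  obtain ⟨F, hF, hcorr⟩ := exists_pos_sum_eq_mul_corr hφ hsymm hcut hβ
  have hab : 2 * β a b * corr φ β a b = ∑ x, F x := by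
    simp [hcorr a b hcut.1]
  have hsum : 0 < ∑ x, F x := Finset.sum_pos (fun x _ => hF x) Finset.univ_nonempty
  have hc : 0 < |2 * β a b| := by positivity
  refine ⟨?_, fun p q hpq hg hne => ?_⟩
  · rw [abs_pos]
    rintro h0
    simp [h0] at hab
    linarith
  · obtain ⟨x₀, hx₀⟩ := exists_pm_mul_eq_neg_one hpq hne
    have hlt := abs_sum_mul_lt_sum hF (s := fun x => pm (x a) * pm (x b) * (pm (x p) * pm (x q)))
      (fun x => by simp [abs_mul]) (i₀ := x₀)
      (i₁ := fun _ => true) (by rw [hx₀]; norm_num) (by simp)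
    rw [← hcorr p q hg, ← hab, abs_mul] at hlt
    exact lt_of_mul_lt_mul_left (hlt.trans_le ((le_abs_self _).trans (abs_mul _ _).le)) hc.le

end Correlation

lemma wgt_eq_abs_corr {d : ℕ} {β : Fin d → Fin d → ℝ} (hcol : (interGraph d β).Colorable 2)
    {p q : Fin d} (hpq : p ≠ q) :
    wgt d β s(p, q) = |corr centeredSigmoid β p q| / 2 ^ d := by
  set w : (Fin d → Bool) → ℝ := fun x => (1 + pm (x p)) * (1 + pm (x q)) with hw
  have hexpand : ∀ (x : Fin d → Bool) (c : ℝ),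
      c * w x = c + c * pm (x p) + c * pm (x q) + c * (pm (x p) * pm (x q)) := by
    intro x c
    ring
  have hind : ∀ (x : Fin d → Bool) (c : ℝ),
      (if ∀ v ∈ s(p, q), x v = true then c else 0) = c * w x / 4 := by
    intro x c
    cases hp : x p <;> cases hq : x q <;> norm_num [hw, hp, hq]
  have hcard : ∑ x, w x = 2 ^ d := by
    have := fun x => hexpand x 1
    simp only [one_mul] at this
    simp [this, Finset.sum_add_distrib, sum_pm, sum_pm_mul_pm hpq]
  have hcorr : ∑ x, centeredSigmoid (fld d β x) * w x = corr centeredSigmoid β p q := by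
    simp only [hexpand, Finset.sum_add_distrib, sum_comp_fld_eq_zero centeredSigmoid_odd hcol,
      sum_comp_fld_mul_pm, corr, zero_add]
  have hsigmoid :
      ∑ x, centeredSigmoid (fld d β x) * w x = 2 * ∑ x, sigmoid (fld d β x) * w x - 2 ^ d := by
    simp only [centeredSigmoid, sub_mul, one_mul, Finset.sum_sub_distrib, hcard, mul_assoc,
      ← Finset.mul_sum]
  have h2d : (0 : ℝ) < 2 ^ d := by positivity
  rw [wgt, condProbY, Finset.cast_card, Finset.sum_filter, Finset.sum_filter]
  simp only [hind, ← Finset.sum_div, one_mul, hcard]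
  rw [← hcorr, hsigmoid, ← abs_of_pos h2d, ← abs_div, abs_of_pos h2d]
  congr 1
  field_simp

namespace SimpleGraph

variable {V : Type*} {G H : SimpleGraph V}

theorem IsAcyclic.exists_isOnlyCrossingEdge (hG : G.IsAcyclic) {a b : V} (hab : G.Adj a b) :
    ∃ g : V → Bool, IsOnlyCrossingEdge G g a b := by
  classical
  set K := G.deleteEdges {s(a, b)}
  have hbridge : ¬ K.Reachable a b := isBridge_iff.mp (isAcyclic_iff_forall_adj_isBridge.mp hG hab)
  refine ⟨fun v => K.connectedComponentMk v = K.connectedComponentMk a, ?_, fun u v huv hg => ?_⟩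
  · simpa [ConnectedComponent.eq] using fun h => hbridge h.symm
  · by_contra hne
    have hK : K.Adj u v := deleteEdges_adj.mpr ⟨huv, hne⟩
    simp [ConnectedComponent.connectedComponentMk_eq_of_adj hK] at hg

theorem Connected.of_forall_adj_reachable {G' : SimpleGraph V} (hG : G.Connected)
    (h : ∀ u v, G.Adj u v → G'.Reachable u v) : G'.Connected := by
  have := hG.nonempty
  refine ⟨fun u v => ?_⟩
  obtain ⟨W⟩ := hG.preconnected u v
  induction W with
  | nil => rfl
  | cons huw _ ih => exact (h _ _ huw).trans ih

theorem Walk.IsPath.exists_crossing (g : V → Bool) {u v : V} {W : G.Walk u v} (hW : W.IsPath)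
    (hg : g u ≠ g v) :
    ∃ p q, G.Adj p q ∧ g p ≠ g q ∧ s(p, q) ∈ W.edges ∧
      (G.deleteEdges {s(p, q)}).Reachable u p ∧ (G.deleteEdges {s(p, q)}).Reachable q v := by
  induction W with
  | nil => exact absurd rfl hg
  | @cons u w v huw W ih =>
    rw [Walk.cons_isPath_iff] at hW
    have hnotin : ∀ {x}, s(u, x) ∉ W.edges := fun h => hW.2 (W.fst_mem_support_of_mem_edges h)
    by_cases hw : g u = g w
    · obtain ⟨p, q, hpq, hgpq, hmem, hwp, hqv⟩ := ih hW.1 (hw ▸ hg)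
      have hne : s(u, w) ≠ s(p, q) := fun h => hnotin (h ▸ hmem)
      exact ⟨p, q, hpq, hgpq, by simp [hmem],
        (deleteEdges_adj.mpr ⟨huw, hne⟩).reachable.trans hwp, hqv⟩
    · exact ⟨u, w, huw, hw, by simp, Reachable.refl _,
        reachable_deleteEdges_iff_exists_walk.mpr ⟨W, hnotin⟩⟩

theorem IsAcyclic.adj_of_le_of_reachable (hH : H.IsAcyclic) (hle : G ≤ H) {u v : V}
    (hadj : H.Adj u v) (hreach : G.Reachable u v) : G.Adj u v := by
  by_contra hG
  refine isBridge_iff.mp (isAcyclic_iff_forall_adj_isBridge.mp hH hadj)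
    (hreach.mono fun x y hxy => deleteEdges_adj.mpr ⟨hle hxy, fun h => hG ?_⟩)
  rcases Sym2.eq_iff.mp (Set.mem_singleton_iff.mp h) with ⟨rfl, rfl⟩ | ⟨rfl, rfl⟩
  exacts [hxy, hxy.symm]

end SimpleGraph

section SpanningTree

open SimpleGraph

variable {V : Type*} [Fintype V] [DecidableEq V]

theorem IsSpanningTree.insert_erase {T : Finset (Sym2 V)} (hT : IsSpanningTree T) {a b p q : V}
    (hab : a ≠ b) (habT : s(a, b) ∉ T) (hpq : s(p, q) ∈ T)
    (hap : ((fromEdgeSet (T : Set (Sym2 V))).deleteEdges {s(p, q)}).Reachable a p)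
    (hqb : ((fromEdgeSet (T : Set (Sym2 V))).deleteEdges {s(p, q)}).Reachable q b) :
    IsSpanningTree (insert s(a, b) (T.erase s(p, q))) := by
  obtain ⟨hcard, hdiag, hconn, hacyc⟩ := hT
  set K := (fromEdgeSet (T : Set (Sym2 V))).deleteEdges {s(p, q)}
  have hT' : fromEdgeSet ↑(insert s(a, b) (T.erase s(p, q))) = K ⊔ edge a b := by
    rw [Finset.coe_insert, Finset.coe_erase, Set.insert_eq, Set.union_comm, edge,
      fromEdgeSet_union, ← deleteEdges_fromEdgeSet]
  have hpqH : (fromEdgeSet (T : Set (Sym2 V))).Adj p q :=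
    (fromEdgeSet_adj _).mpr ⟨hpq, fun h => hdiag _ hpq (Sym2.mk_isDiag_iff.mpr h)⟩
  have hKpq : ¬ K.Reachable p q :=
    isBridge_iff.mp (isAcyclic_iff_forall_adj_isBridge.mp hacyc hpqH)
  have hpq' : (K ⊔ edge a b).Reachable p q :=
    ((hap.symm.mono le_sup_left).trans (Adj.reachable (by simp [edge_adj, hab]))).trans
      (hqb.symm.mono le_sup_left)
  refine ⟨?_, ?_, ?_, ?_⟩
  · rw [Finset.card_insert_of_notMem fun h => habT (Finset.mem_of_mem_erase h),
      Finset.card_erase_of_mem hpq]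
    have := Finset.card_pos.mpr ⟨_, hpq⟩
    omega
  · intro e he
    rcases Finset.mem_insert.mp he with rfl | he
    · exact Sym2.mk_isDiag_iff.not.mpr hab
    · exact hdiag e (Finset.mem_of_mem_erase he)
  · rw [hT']
    refine hconn.of_forall_adj_reachable fun u v huv => ?_
    by_cases he : s(u, v) = s(p, q)
    · rcases Sym2.eq_iff.mp he with ⟨rfl, rfl⟩ | ⟨rfl, rfl⟩
      exacts [hpq', hpq'.symm]
    · exact Adj.reachable ((sup_adj _ _ _ _).mpr (.inl (deleteEdges_adj.mpr ⟨huv, he⟩)))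
  · rw [hT']
    exact (hacyc.anti (deleteEdges_le _)).sup_edge_of_not_reachable
      fun h => hKpq ((hap.symm.trans h).trans hqb.symm)

theorem IsMaxSpanningTree.mem_of_forall_crossing_lt {u : Sym2 V → ℝ} {T : Finset (Sym2 V)}
    (hT : IsMaxSpanningTree u T) {g : V → Bool} {a b : V} (hg : g a ≠ g b)
    (hlt : ∀ p q, g p ≠ g q → s(p, q) ≠ s(a, b) → u s(p, q) < u s(a, b)) : s(a, b) ∈ T := by
  by_contra habT
  obtain ⟨hspan, hmax⟩ := hT
  obtain ⟨W⟩ := hspan.2.2.1.preconnected a b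
  obtain ⟨p, q, hpq, hgpq, -, hap, hqb⟩ := W.bypass_isPath.exists_crossing g hg
  have hpqT : s(p, q) ∈ T := ((fromEdgeSet_adj _).mp hpq).1
  have hsum := hmax _ (hspan.insert_erase (ne_of_apply_ne g hg) habT hpqT hap hqb)
  rw [Finset.sum_insert fun h => habT (Finset.mem_of_mem_erase h)] at hsum
  have := Finset.sum_erase_add T u hpqT
  linarith [hlt p q hgpq fun h => habT (h ▸ hpqT)]

end SpanningTree

lemma mem_and_wgt_pos_of_ne_zero {d : ℕ} {β : Fin d → Fin d → ℝ} (hsymm : ∀ i j, β i j = β j i)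
    (hacyc : (interGraph d β).IsAcyclic) {T : Finset (Sym2 (Fin d))}
    (hT : IsMaxSpanningTree (wgt d β) T) {i j : Fin d} (hij : i ≠ j) (hβ : β i j ≠ 0) :
    s(i, j) ∈ T ∧ 0 < wgt d β s(i, j) := by
  have hcol := hacyc.colorable_two
  obtain ⟨g, hcut⟩ := hacyc.exists_isOnlyCrossingEdge (interGraph_adj_of_ne_zero hij hβ)
  obtain ⟨hpos, hlt⟩ :=
    abs_corr_pos_and_lt_of_isOnlyCrossingEdge centeredSigmoid_strictMono hsymm hcut hβ
  rw [wgt_eq_abs_corr hcol hij]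
  refine ⟨hT.mem_of_forall_crossing_lt hcut.1 fun p q hg hne => ?_, div_pos hpos (by positivity)⟩
  have hpq : p ≠ q := ne_of_apply_ne g hg
  rw [wgt_eq_abs_corr hcol hpq, wgt_eq_abs_corr hcol hij]
  exact div_lt_div_of_pos_right (hlt p q hpq hg hne) (by positivity)

theorem statement6_general (d : ℕ) (β : Fin d → Fin d → ℝ)
    (hsymm : ∀ i j, β i j = β j i)
    (hacyc : (interGraph d β).IsAcyclic)
    (T : Finset (Sym2 (Fin d))) (hT : IsMaxSpanningTree (wgt d β) T)
    (i j : Fin d) (hij : i ≠ j) :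
    β i j ≠ 0 ↔ s(i, j) ∈ T ∧ 0 < wgt d β s(i, j) := by
  refine ⟨mem_and_wgt_pos_of_ne_zero hsymm hacyc hT hij, fun ⟨hmem, hpos⟩ => ?_⟩
  have hreach : (interGraph d β).Reachable i j := by
    by_contra h
    rw [wgt_eq_abs_corr hacyc.colorable_two hij, corr_eq_zero_of_not_reachable h] at hpos
    simp at hpos
  have hle : interGraph d β ≤ SimpleGraph.fromEdgeSet (T : Set (Sym2 (Fin d))) := fun u v huv => by
    obtain ⟨huv, hβ⟩ := (interGraph_adj_iff hsymm).mp huv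
    exact (SimpleGraph.fromEdgeSet_adj _).mpr
      ⟨(mem_and_wgt_pos_of_ne_zero hsymm hacyc hT huv hβ).1, huv⟩
  have hTacyc : (SimpleGraph.fromEdgeSet (T : Set (Sym2 (Fin d)))).IsAcyclic := hT.1.2.2.2
  have hTij := (SimpleGraph.fromEdgeSet_adj _).mpr ⟨hmem, hij⟩
  exact ((interGraph_adj_iff hsymm).mp (hTacyc.adj_of_le_of_reachable hle hTij hreach)).2

/-- Theorem 2, Acyclic graphs: if the interaction graph is acyclic and `T`
is a maximum-weight spanning tree of the complete graph on `V` with respect to the influence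
weight assignment `w`, then `{i,j} ∈ I` iff `{i,j} ∈ T` and `w_{{i,j}} > 0`. -/
theorem statement6 (d : ℕ) (hd : 2 ≤ d) (β : Fin d → Fin d → ℝ)
    (hsymm : ∀ i j, β i j = β j i)
    (hacyc : (interGraph d β).IsAcyclic)
    (T : Finset (Sym2 (Fin d))) (hT : IsMaxSpanningTree (wgt d β) T)
    (i j : Fin d) (hij : i ≠ j) :
    β i j ≠ 0 ↔ s(i, j) ∈ T ∧ 0 < wgt d β s(i, j) :=
  statement6_general d β hsymm hacyc T hT i j hij
end

section
/- Assume the interaction graph G = (V, I) is acyclic. Then for every i ∈ V, Pr(x_i = +1, y = +1) = 1/4; equivalently, Pr(y = +1 | x_i = +1) = 1/2. -/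
/-!
An acyclic graph is bipartite, so there is a sign pattern `s` with `s i = false` that differs
across every interaction edge. Flipping `x` along `s` fixes `x i` and negates every term
`β i j * x i * x j`, hence pairs each `x` with `x i = true` with a partner of opposite logit.
Since `σ(-t) = 1 - σ(t)`, the values `σ(fld x)` average to `1/2` over `{x | x i = true}`.
-/

open Finset

lemma sigmoid_neg (t : ℝ) : sigmoid (-t) = 1 - sigmoid t := by
  unfold sigmoid
  rw [Real.exp_neg]
  field_simp
  ring

lemma pm_xor (p q : Bool) : pm (xor p q) = -(pm p * pm q) := by
  cases p <;> cases q <;> simp [pm]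

lemma Finset.two_mul_sum_eq_card_of_involutive {α : Type*} {A : Finset α} {f : α → α}
    {g : α → ℝ} (hf : Function.Involutive f) (hA : ∀ x ∈ A, f x ∈ A)
    (hg : ∀ x ∈ A, g (f x) = 1 - g x) :
    2 * ∑ x ∈ A, g x = #A := by
  have hswap : ∑ x ∈ A, g x = ∑ x ∈ A, g (f x) :=
    (sum_nbij' f f hA hA (fun x _ => hf x) (fun x _ => hf x) (fun _ _ => rfl)).symm
  rw [sum_congr rfl hg, sum_sub_distrib, sum_const, nsmul_one] at hswap
  linarith

lemma Fintype.two_mul_card_filter_apply_eq {ι : Type*} [Fintype ι] [DecidableEq ι]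
    (i : ι) (b : Bool) : 2 * #{x : ι → Bool | x i = b} = 2 ^ Fintype.card ι := by
  have hcard := card_filter_piFinset_const_eq_of_mem (univ : Finset Bool) i (mem_univ b)
  rw [piFinset_univ, card_univ, Fintype.card_bool] at hcard
  rw [hcard, ← pow_succ', Nat.sub_add_cancel (Fintype.card_pos_iff.mpr ⟨i⟩)]

lemma SimpleGraph.Colorable.exists_bool_coloring {V : Type*} {G : SimpleGraph V}
    (hG : G.Colorable 2) (i : V) :
    ∃ s : V → Bool, s i = false ∧ ∀ a b, G.Adj a b → s a ≠ s b := by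
  obtain ⟨C⟩ := hG
  refine ⟨fun v => decide (C v ≠ C i), by simp, fun a b hab => ?_⟩
  have := C.valid hab
  simp only [ne_eq, decide_eq_decide, Fin.ext_iff] at this ⊢
  omega

lemma fld_xor_of_adj_ne {d : ℕ} {β : Fin d → Fin d → ℝ} {s : Fin d → Bool}
    (hs : ∀ a b, (interGraph d β).Adj a b → s a ≠ s b) (x : Fin d → Bool) :
    fld d β (fun v => xor (x v) (s v)) = -fld d β x := by
  simp only [fld, ← sum_neg_distrib]
  refine sum_congr rfl fun a _ => sum_congr rfl fun b hb => ?_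
  by_cases hβ : β a b = 0
  · simp [hβ]
  have hsab : pm (s a) * pm (s b) = -1 := by
    have := hs a b ⟨(mem_Ioi.mp hb).ne, Or.inl hβ⟩
    revert this; cases s a <;> cases s b <;> simp [pm]
  calc β a b * pm (xor (x a) (s a)) * pm (xor (x b) (s b))
      = β a b * pm (x a) * pm (x b) * (pm (s a) * pm (s b)) := by rw [pm_xor, pm_xor]; ring
    _ = -(β a b * pm (x a) * pm (x b)) := by rw [hsab]; ring

theorem statement12_general (d : ℕ) (β : Fin d → Fin d → ℝ)
    (hacyc : (interGraph d β).IsAcyclic) (i : Fin d) :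
    (∑ x ∈ Finset.univ.filter (fun x : Fin d → Bool => x i = true),
        sigmoid (fld d β x)) / 2 ^ d = 1 / 4 ∧
    condProbY d β 1 (Finset.univ.filter (fun x : Fin d → Bool => x i = true)) = 1 / 2 := by
  obtain ⟨s, hsi, hs⟩ := hacyc.colorable_two.exists_bool_coloring i
  set A : Finset (Fin d → Bool) := {x | x i = true}
  have hpair : 2 * ∑ x ∈ A, sigmoid (fld d β x) = #A :=
    two_mul_sum_eq_card_of_involutive (f := fun x v => xor (x v) (s v))
      (fun x => by simp) (fun x => by simp [A, hsi])
      (fun x _ => by rw [fld_xor_of_adj_ne hs, sigmoid_neg])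
  have hcard : (2 : ℝ) * #A = 2 ^ d := by
    exact_mod_cast (Fintype.card_fin d ▸ Fintype.two_mul_card_filter_apply_eq i true)
  have hA : (#A : ℝ) = 2 ^ d / 2 := by linarith
  have hsum : ∑ x ∈ A, sigmoid (fld d β x) = 2 ^ d / 4 := by linarith
  refine ⟨?_, ?_⟩
  · rw [hsum]
    field_simp
  · rw [condProbY, hA]
    simp only [one_mul]
    rw [hsum]
    field_simp
    ring

/-- Lemma 1: if the interaction graph is acyclic, then for every `i ∈ V`,
`Pr(x_i = +1, y = +1) = 1/4`; equivalently, `Pr(y = +1 | x_i = +1) = 1/2`. -/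
theorem statement12 (d : ℕ) (hd : 2 ≤ d) (β : Fin d → Fin d → ℝ)
    (hsymm : ∀ i j, β i j = β j i)
    (hacyc : (interGraph d β).IsAcyclic) (i : Fin d) :
    (∑ x ∈ Finset.univ.filter (fun x : Fin d → Bool => x i = true),
        sigmoid (fld d β x)) / 2 ^ d = 1 / 4 ∧
    condProbY d β 1 (Finset.univ.filter (fun x : Fin d → Bool => x i = true)) = 1 / 2 :=
  statement12_general d β hacyc i
end
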